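/- arXiv:1908.09248 — 4 statements merged into one kernel-verified Lean document; each statement's English description precedes it below -/
import Mathlib

section
/- Let n ∈ ℕ, d = (d₁,…,d_n) ∈ ℕ^n and γ = (γ₁,…,γ_n) ∈ ℂ^n with Re γ_j > 0 for all j. For every s = (s₁,…,s_n) ∈ ℂ^n such that Re(s_j + s_{j+1} + ⋯ + s_n) > 1/d_j + 1/d_{j+1} + ⋯ + 1/d_n for all j = 1,…,n, the family m ↦ ∏_{j=1}^n L_j(m)^{−s_j}, indexed by m ∈ (ℕ_{≥1})^n, is absolutely summable; in particular the multiple series ζ_{n,d,γ}(s) converges absolutely at every such point s. -/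
/-!
Put `σ_j = Re s_j` and `R_j = Re L_j(m)`. As all `γ_i` lie in a sector `‖γ‖ ≤ K Re γ`, so do
the `L_j(m)`, hence `‖L_j^{-s_j}‖ ≤ e^{π|Im s_j|} K^{|σ_j|} R_j^{-σ_j}`; moreover `R_j` increases
in `j` and `R_j ≥ c m_j^{d_j}` for a positive lower bound `c` of the `Re γ_i`. The hypothesis is
an open condition, so it survives replacing `1/d_j` by `u_j = 1/d_j + ε`. Since the tail sums of
`u - σ` are nonpositive and `R` is increasing, summation by parts gives
`∏ R_j^{u_j - σ_j} ≤ c^{∑ (u_j - σ_j)}`, and what remains, `∏ R_j^{-u_j} ≤ ∏ (c m_j^{d_j})^{-u_j}`,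
is a product of convergent `p`-series with `p = d_j u_j = 1 + ε d_j`.
-/

open Finset

/-- `L_j(m) = γ₁ m₁^{d₁} + ⋯ + γ_j m_j^{d_j}`. -/
noncomputable def Lfun {n : ℕ} (d : Fin n → ℕ) (γ : Fin n → ℂ) (m : Fin n → ℕ) (j : Fin n) : ℂ :=
  ∑ i ∈ Finset.Iic j, γ i * ((m i : ℂ)) ^ (d i)

open Filter Topology Real

lemma summable_fin_prod_of_nonneg {α : Type*} :
    ∀ {n : ℕ} {f : Fin n → α → ℝ}, (∀ j a, 0 ≤ f j a) → (∀ j, Summable (f j)) →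
      Summable fun m : Fin n → α => ∏ j, f j (m j)
  | 0, _, _, _ => .of_finite
  | n + 1, f, hf0, hf => by
    have hprod := (hf 0).mul_of_nonneg
      (summable_fin_prod_of_nonneg (fun j => hf0 j.succ) fun j => hf j.succ) (hf0 0)
      fun m => prod_nonneg fun j _ => hf0 _ _
    refine (hprod.comp_injective (Fin.consEquiv fun _ => α).symm.injective).congr fun m => ?_
    simp [Fin.consEquiv, Fin.prod_univ_succ, Fin.tail]

lemma summable_rpow_neg_mul_pow {c u : ℝ} {d : ℕ} (hc : 0 < c) (hdu : 1 < d * u) :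
    Summable fun k : ℕ => (c * ((k : ℝ) + 1) ^ d) ^ (-u) := by
  have hp : Summable fun k : ℕ => ((k + 1 : ℕ) : ℝ) ^ (-(d * u)) :=
    (summable_nat_add_iff 1).2 (summable_nat_rpow.2 (by linarith))
  refine (hp.mul_left (c ^ (-u))).congr fun k => ?_
  rw [mul_rpow hc.le (by positivity), ← rpow_natCast, ← rpow_mul (by positivity)]
  push_cast
  ring_nf

lemma Real.rpow_le_rpow_abs_mul_rpow {x R K y : ℝ} (hR : 0 < R) (hRx : R ≤ x) (hxK : x ≤ K * R) :
    x ^ y ≤ K ^ |y| * R ^ y := by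
  have hK : 1 ≤ K := le_of_mul_le_mul_right (by linarith) hR
  rcases le_or_gt 0 y with hy | hy
  · calc x ^ y ≤ (K * R) ^ y := rpow_le_rpow (hR.le.trans hRx) hxK hy
      _ = K ^ |y| * R ^ y := by rw [abs_of_nonneg hy, mul_rpow (by linarith) hR.le]
  · calc x ^ y ≤ R ^ y := rpow_le_rpow_of_nonpos hR hRx hy.le
      _ ≤ K ^ |y| * R ^ y :=
        le_mul_of_one_le_left (rpow_nonneg hR.le _) (one_le_rpow hK (abs_nonneg _))

lemma Complex.norm_cpow_le_exp_mul_rpow (z w : ℂ) :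
    ‖z ^ w‖ ≤ Real.exp (π * |w.im|) * ‖z‖ ^ w.re := by
  calc ‖z ^ w‖ ≤ ‖z‖ ^ w.re / Real.exp (arg z * w.im) := norm_cpow_le z w
    _ = Real.exp (-(arg z * w.im)) * ‖z‖ ^ w.re := by rw [Real.exp_neg]; ring
    _ ≤ Real.exp (π * |w.im|) * ‖z‖ ^ w.re := by
      gcongr
      calc -(arg z * w.im) ≤ |arg z| * |w.im| := (neg_le_abs _).trans (abs_mul _ _).le
        _ ≤ π * |w.im| := by gcongr; exact abs_arg_le_pi z

lemma Complex.norm_cpow_le_of_norm_le_mul_re {z : ℂ} {K : ℝ} (hz : 0 < z.re)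
    (hzK : ‖z‖ ≤ K * z.re) (w : ℂ) :
    ‖z ^ w‖ ≤ Real.exp (π * |w.im|) * K ^ |w.re| * z.re ^ w.re :=
  calc ‖z ^ w‖ ≤ Real.exp (π * |w.im|) * ‖z‖ ^ w.re := norm_cpow_le_exp_mul_rpow z w
    _ ≤ Real.exp (π * |w.im|) * (K ^ |w.re| * z.re ^ w.re) := by
      gcongr; exact rpow_le_rpow_abs_mul_rpow hz (re_le_norm z) hzK
    _ = _ := (mul_assoc _ _ _).symm

lemma Complex.norm_sum_le_mul_re_sum {ι : Type*} {s : Finset ι} {z : ι → ℂ} {K : ℝ}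
    (h : ∀ i ∈ s, ‖z i‖ ≤ K * (z i).re) : ‖∑ i ∈ s, z i‖ ≤ K * (∑ i ∈ s, z i).re := by
  rw [re_sum, mul_sum]
  exact (norm_sum_le _ _).trans (sum_le_sum h)

lemma Fin.prod_rpow_le_rpow_sum :
    ∀ {n : ℕ} {R v : Fin n → ℝ} {r : ℝ}, 0 < r → (∀ j, r ≤ R j) → Monotone R →
      (∀ j, ∑ i ∈ Ici j, v i ≤ 0) → ∏ j, R j ^ v j ≤ r ^ ∑ j, v j
  | 0, _, _, _, _, _, _, _ => by simp
  | n + 1, R, v, r, hr, hrR, hR, hv => by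
    have hR0 : 0 < R 0 := hr.trans_le (hrR 0)
    have htail : ∏ j : Fin n, R j.succ ^ v j.succ ≤ R 0 ^ ∑ j : Fin n, v j.succ :=
      prod_rpow_le_rpow_sum hR0 (fun j => hR (Fin.zero_le _)) (hR.comp strictMono_succ.monotone)
        fun j => by simpa [← map_succEmb_Ici, sum_map] using hv j.succ
    have hsum : ∑ j, v j ≤ 0 := by simpa using hv 0
    calc ∏ j, R j ^ v j = R 0 ^ v 0 * ∏ j : Fin n, R j.succ ^ v j.succ := prod_univ_succ _
      _ ≤ R 0 ^ v 0 * R 0 ^ ∑ j : Fin n, v j.succ := by gcongr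
      _ = R 0 ^ ∑ j, v j := by rw [← rpow_add hR0, sum_univ_succ]
      _ ≤ r ^ ∑ j, v j := rpow_le_rpow_of_nonpos hr (hrR 0) hsum

section Lfun

variable {n : ℕ} (d : Fin n → ℕ) (γ : Fin n → ℂ) (m : Fin n → ℕ)

lemma re_Lfun (j : Fin n) : (Lfun d γ m j).re = ∑ i ∈ Iic j, (γ i).re * (m i : ℝ) ^ d i := by
  simp [Lfun, Complex.re_sum, Complex.mul_re, ← Complex.ofReal_natCast, ← Complex.ofReal_pow]

variable {d γ}

lemma monotone_re_Lfun (hγ : ∀ i, 0 ≤ (γ i).re) : Monotone fun j => (Lfun d γ m j).re :=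
  fun _ _ hjk => by
    simp only [re_Lfun]
    exact sum_le_sum_of_subset_of_nonneg (Iic_subset_Iic.2 hjk) fun i _ _ => by
      have := hγ i; positivity

lemma re_mul_pow_le_re_Lfun (hγ : ∀ i, 0 ≤ (γ i).re) (j : Fin n) :
    (γ j).re * (m j : ℝ) ^ d j ≤ (Lfun d γ m j).re := by
  rw [re_Lfun]
  exact single_le_sum (f := fun i => (γ i).re * (m i : ℝ) ^ d i)
    (fun i _ => by have := hγ i; positivity) (mem_Iic.2 le_rfl)

lemma norm_Lfun_le_mul_re {K : ℝ} (hK : ∀ i, ‖γ i‖ ≤ K * (γ i).re) (j : Fin n) :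
    ‖Lfun d γ m j‖ ≤ K * (Lfun d γ m j).re :=
  Complex.norm_sum_le_mul_re_sum fun i _ => by
    simpa [Complex.mul_re, ← Complex.ofReal_natCast, ← Complex.ofReal_pow, mul_assoc] using
      mul_le_mul_of_nonneg_right (hK i) (by positivity : (0 : ℝ) ≤ (m i : ℝ) ^ d i)

end Lfun

lemma exists_norm_prod_Lfun_cpow_le {n : ℕ} {d : Fin n → ℕ} {γ s : Fin n → ℂ} {u : Fin n → ℝ}
    {c K : ℝ} (hc : 0 < c) (hcγ : ∀ i, c ≤ (γ i).re) (hK : ∀ i, ‖γ i‖ ≤ K * (γ i).re)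
    (hu : ∀ j, 0 ≤ u j) (hus : ∀ j, ∑ i ∈ Ici j, u i ≤ ∑ i ∈ Ici j, (s i).re) :
    ∃ C, ∀ m : Fin n → ℕ, ‖∏ j, Lfun d γ (fun i => m i + 1) j ^ (-s j)‖ ≤
      C * ∏ j, (c * ((m j : ℝ) + 1) ^ d j) ^ (-u j) := by
  refine ⟨(∏ j, exp (π * |(s j).im|) * K ^ |(s j).re|) * c ^ ∑ j, (u j - (s j).re),
    fun m => ?_⟩
  set R := fun j => (Lfun d γ (fun i => m i + 1) j).re
  have hγ : ∀ i, 0 ≤ (γ i).re := fun i => hc.le.trans (hcγ i)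
  have hcR : ∀ j, c * ((m j : ℝ) + 1) ^ d j ≤ R j := fun j =>
    (mul_le_mul_of_nonneg_right (hcγ j) (by positivity)).trans
      (by simpa using re_mul_pow_le_re_Lfun (fun i => m i + 1) hγ j)
  have hc_le_R : ∀ j, c ≤ R j := fun j =>
    (le_mul_of_one_le_right hc.le (one_le_pow₀ (by simp))).trans (hcR j)
  have hR : ∀ j, 0 < R j := fun j => hc.trans_le (hc_le_R j)
  have hsplit : ∀ j, R j ^ (-(s j).re) = R j ^ (u j - (s j).re) * R j ^ (-u j) := fun j => by
    rw [← rpow_add (hR j)]; ring_nf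
  calc ‖∏ j, Lfun d γ (fun i => m i + 1) j ^ (-s j)‖
      ≤ ∏ j, exp (π * |(s j).im|) * K ^ |(s j).re| * R j ^ (-(s j).re) := by
        rw [norm_prod]
        refine prod_le_prod (fun _ _ => norm_nonneg _) fun j _ => ?_
        simpa using
          Complex.norm_cpow_le_of_norm_le_mul_re (hR j) (norm_Lfun_le_mul_re _ hK j) (-s j)
    _ = (∏ j, exp (π * |(s j).im|) * K ^ |(s j).re|) *
          ((∏ j, R j ^ (u j - (s j).re)) * ∏ j, R j ^ (-u j)) := by
        simp only [hsplit, prod_mul_distrib]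
    _ ≤ (∏ j, exp (π * |(s j).im|) * K ^ |(s j).re|) *
          (c ^ (∑ j, (u j - (s j).re)) * ∏ j, (c * ((m j : ℝ) + 1) ^ d j) ^ (-u j)) := by
        have hAbel : ∏ j, R j ^ (u j - (s j).re) ≤ c ^ ∑ j, (u j - (s j).re) :=
          Fin.prod_rpow_le_rpow_sum hc hc_le_R (monotone_re_Lfun _ hγ)
            fun j => by simpa [sum_sub_distrib] using hus j
        have hlower : ∏ j, R j ^ (-u j) ≤ ∏ j, (c * ((m j : ℝ) + 1) ^ d j) ^ (-u j) :=
          prod_le_prod (fun j _ => (rpow_pos_of_pos (hR j) _).le)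
            fun j _ => rpow_le_rpow_of_nonpos (by positivity) (hcR j) (neg_nonpos.2 (hu j))
        have hpos : 0 ≤ ∏ j, R j ^ (-u j) :=
          prod_nonneg fun j _ => (rpow_pos_of_pos (hR j) _).le
        have hK0 : ∀ j, 0 ≤ K := fun j =>
          nonneg_of_mul_nonneg_left ((norm_nonneg _).trans (hK j)) (hc.trans_le (hcγ j))
        gcongr
        exact prod_nonneg fun j _ => by have := hK0 j; positivity
    _ = _ := by ring

theorem stmt0_general (n : ℕ) (d : Fin n → ℕ) (hd : ∀ j, 0 < d j)
    (γ : Fin n → ℂ) (hγ : ∀ j, 0 < (γ j).re) (s : Fin n → ℂ)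
    (hs : ∀ j : Fin n, (∑ i ∈ Finset.Ici j, 1 / (d i : ℝ)) < ∑ i ∈ Finset.Ici j, (s i).re) :
    Summable (fun m : Fin n → ℕ => ‖∏ j, (Lfun d γ (fun i => m i + 1) j) ^ (-(s j))‖) := by
  obtain ⟨ε, hεs, hε⟩ : ∃ ε : ℝ,
      (∀ j, ∑ i ∈ Ici j, (1 / (d i : ℝ) + ε) < ∑ i ∈ Ici j, (s i).re) ∧ 0 < ε := by
    refine ((eventually_all.2 fun j => ?_).and self_mem_nhdsWithin).exists (f := 𝓝[>] 0)
    have hcont : Continuous fun ε : ℝ => ∑ i ∈ Ici j, (1 / (d i : ℝ) + ε) := by fun_prop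
    exact nhdsWithin_le_nhds (hcont.tendsto 0 (gt_mem_nhds (by simpa using hs j)))
  obtain ⟨c, hcγ, hc⟩ : ∃ c : ℝ, (∀ i, c ≤ (γ i).re) ∧ 0 < c :=
    ((eventually_all.2 fun i => nhdsWithin_le_nhds (eventually_le_nhds (hγ i))).and
      self_mem_nhdsWithin).exists (f := 𝓝[>] 0)
  obtain ⟨K, hK⟩ := Finite.exists_le fun i => ‖γ i‖ / (γ i).re
  obtain ⟨C, hC⟩ := exists_norm_prod_Lfun_cpow_le (d := d) (u := fun j => 1 / (d j : ℝ) + ε) hc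
    hcγ (fun i => (div_le_iff₀ (hγ i)).1 (hK i)) (fun j => by positivity) fun j => (hεs j).le
  have hsum : Summable fun m : Fin n → ℕ =>
      ∏ j, (c * ((m j : ℝ) + 1) ^ d j) ^ (-(1 / (d j : ℝ) + ε)) := by
    refine summable_fin_prod_of_nonneg
      (f := fun j (k : ℕ) => (c * ((k : ℝ) + 1) ^ d j) ^ (-(1 / (d j : ℝ) + ε)))
      (fun j k => by positivity) fun j => summable_rpow_neg_mul_pow hc ?_
    have hdj : (0 : ℝ) < d j := by exact_mod_cast hd j
    rw [mul_add, mul_one_div_cancel hdj.ne']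
    exact lt_add_of_pos_right 1 (mul_pos hdj hε)
  exact .of_nonneg_of_le (fun m => norm_nonneg _) hC (hsum.mul_left C)

/-- In the domain `Re(s_j+⋯+s_n) > 1/d_j + ⋯ + 1/d_n` (for all `j`), the family
`m ↦ ∏_j L_j(m)^{-s_j}`, indexed by `m ∈ (ℕ_{≥1})^n`, is absolutely summable. -/
theorem stmt0 (n : ℕ) (hn : 0 < n) (d : Fin n → ℕ) (hd : ∀ j, 0 < d j)
    (γ : Fin n → ℂ) (hγ : ∀ j, 0 < (γ j).re) (s : Fin n → ℂ)
    (hs : ∀ j : Fin n, (∑ i ∈ Finset.Ici j, 1 / (d i : ℝ)) < ∑ i ∈ Finset.Ici j, (s i).re) :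
    Summable (fun m : Fin n → ℕ => ‖∏ j, (Lfun d γ (fun i => m i + 1) j) ^ (-(s j))‖) :=
  stmt0_general n d hd γ hγ s hs
end

section
/- Let d > 0 be a real number and let a, b, s ∈ ℂ with Re a > 0, Re b > 0 and Re s > 1/d. Then ∫₀^∞ (b + a·x^d)^{−s} dx = (1/(d · a^{1/d} · b^{s−1/d})) · Γ(s − 1/d) · Γ(1/d) / Γ(s), where Γ is the complex Gamma function. -/
/-!
Write `(b + a xᵈ)^(-s) = Γ(s)⁻¹ ∫₀^∞ t^(s-1) e^(-(b + a xᵈ) t) dt`, swap the two integrals,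
evaluate `∫₀^∞ e^(-a t xᵈ) dx = Γ(1/d) (a t)^(-1/d) / d` by the substitution `y = xᵈ`, and
recognise the remaining `t`-integral as `Γ(s - 1/d) b^(-(s - 1/d))`. Both Gamma integrals have a
complex rate, which is reached from real rates by analytic continuation.
-/

open Complex Set MeasureTheory Filter Metric Topology
open scoped Real

lemma norm_cpow_mul_cexp_neg_mul (z w : ℂ) {t : ℝ} (ht : 0 < t) :
    ‖(t : ℂ) ^ (z - 1) * cexp (-(w * t))‖ = t ^ (z.re - 1) * rexp (-(w.re * t)) := by
  rw [norm_mul, norm_cpow_eq_rpow_re_of_pos ht, norm_exp]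
  simp

lemma integrableOn_rpow_mul_exp_neg_mul {e c : ℝ} (he : -1 < e) (hc : 0 < c) :
    IntegrableOn (fun t : ℝ => t ^ e * rexp (-(c * t))) (Ioi 0) := by
  simpa using integrableOn_rpow_mul_exp_neg_mul_rpow he one_pos hc

lemma integrableOn_cpow_mul_cexp_neg_mul {z w : ℂ} (hz : 0 < z.re) (hw : 0 < w.re) :
    IntegrableOn (fun t : ℝ => (t : ℂ) ^ (z - 1) * cexp (-(w * t))) (Ioi 0) := by
  refine Integrable.mono'
    (integrableOn_rpow_mul_exp_neg_mul (e := z.re - 1) (by linarith) hw)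
    (by fun_prop : Measurable _).aestronglyMeasurable ?_
  filter_upwards [ae_restrict_mem measurableSet_Ioi] with t ht
  rw [norm_cpow_mul_cexp_neg_mul z w ht]

lemma differentiableOn_integral_cpow_mul_cexp_neg_mul {z : ℂ} (hz : 0 < z.re) :
    DifferentiableOn ℂ (fun w : ℂ => ∫ t in Ioi (0 : ℝ), (t : ℂ) ^ (z - 1) * cexp (-(w * t)))
      {w | 0 < w.re} := by
  intro w₀ (hw₀ : 0 < w₀.re)
  have hε : 0 < w₀.re / 2 := by positivity
  have hre : ∀ w ∈ ball w₀ (w₀.re / 2), w₀.re / 2 ≤ w.re := fun w hw => by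
    have := (abs_re_le_norm (w - w₀)).trans_lt (mem_ball_iff_norm.1 hw)
    rw [sub_re] at this
    linarith [(abs_lt.1 this).1]
  refine (hasDerivAt_integral_of_dominated_loc_of_deriv_le (μ := volume.restrict (Ioi 0))
    (F := fun w (t : ℝ) => (t : ℂ) ^ (z - 1) * cexp (-(w * t))) (ball_mem_nhds w₀ hε)
    (F' := fun w (t : ℝ) => (t : ℂ) ^ (z - 1) * (cexp (-(w * t)) * -t))
    (bound := fun t : ℝ => t ^ z.re * rexp (-(w₀.re / 2 * t)))
    (Eventually.of_forall fun w => (by fun_prop : Measurable _).aestronglyMeasurable)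
    (integrableOn_cpow_mul_cexp_neg_mul hz hw₀)
    (by fun_prop : Measurable _).aestronglyMeasurable ?_
    (integrableOn_rpow_mul_exp_neg_mul (by linarith) hε)
    ?_).2.differentiableAt.differentiableWithinAt
  · filter_upwards [ae_restrict_mem measurableSet_Ioi] with t (ht : 0 < t) w hw
    calc ‖(t : ℂ) ^ (z - 1) * (cexp (-(w * t)) * -t)‖
        = t ^ (z.re - 1) * rexp (-(w.re * t)) * t := by
          rw [← mul_assoc, norm_mul, norm_cpow_mul_cexp_neg_mul z w ht, norm_neg, norm_real,
            Real.norm_of_nonneg ht.le]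
      _ = t ^ z.re * rexp (-(w.re * t)) := by
          rw [Real.rpow_sub_one ht.ne']; field_simp
      _ ≤ t ^ z.re * rexp (-(w₀.re / 2 * t)) := by
          gcongr; exact hre w hw
  · exact ae_of_all _ fun t w _ => ((hasDerivAt_mul_const (t : ℂ)).neg.cexp).const_mul _

-- Both sides are holomorphic in `w` on the right half-plane and agree for real `w > 0`.
theorem integral_cpow_mul_cexp_neg_mul_Ioi {z w : ℂ} (hz : 0 < z.re) (hw : 0 < w.re) :
    ∫ t in Ioi (0 : ℝ), (t : ℂ) ^ (z - 1) * cexp (-(w * t)) = Gamma z * w ^ (-z) := by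
  have hU : IsOpen {w : ℂ | 0 < w.re} := isOpen_lt continuous_const continuous_re
  have hreal : ∀ r : ℝ, 0 < r →
      ∫ t in Ioi (0 : ℝ), (t : ℂ) ^ (z - 1) * cexp (-(r * t)) = Gamma z * (r : ℂ) ^ (-z) := by
    intro r hr
    rw [integral_cpow_mul_exp_neg_mul_Ioi hz hr, one_div, inv_cpow _ _ (by
      rw [arg_ofReal_of_nonneg hr.le]; exact Real.pi_ne_zero.symm), ← cpow_neg, mul_comm]
  have hlim : Tendsto ((↑) : ℝ → ℂ) (𝓝[≠] 1) (𝓝[≠] 1) :=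
    tendsto_nhdsWithin_of_tendsto_nhds_of_eventually_within _
      (ofReal_one ▸ continuous_ofReal.continuousAt.mono_left nhdsWithin_le_nhds)
      (eventually_nhdsWithin_of_forall fun x hx => by simpa using hx)
  have hF := (differentiableOn_integral_cpow_mul_cexp_neg_mul hz).analyticOnNhd hU
  have hG : AnalyticOnNhd ℂ (fun w => Gamma z * w ^ (-z)) {w | 0 < w.re} :=
    DifferentiableOn.analyticOnNhd (fun w hw => ((differentiableAt_id.cpow
      (differentiableAt_const _) (Or.inl hw)).const_mul _).differentiableWithinAt) hU
  exact hF.eqOn_of_preconnected_of_frequently_eq hG (convex_halfSpace_re_gt 0).isPreconnected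
    (by simp : (1 : ℂ) ∈ {w : ℂ | 0 < w.re})
    (hlim.frequently
      ((eventually_nhdsWithin_of_eventually_nhds (lt_mem_nhds one_pos)).mono hreal).frequently) hw

lemma ofReal_rpow_sub_one_mul_ofReal_rpow_cpow {d x : ℝ} (hd : d ≠ 0) (hx : 0 < x) :
    ((x ^ (d - 1) : ℝ) : ℂ) * ((x ^ d : ℝ) : ℂ) ^ (1 / (d : ℂ) - 1) = 1 := by
  rw [show 1 / (d : ℂ) - 1 = ((1 / d - 1 : ℝ) : ℂ) by push_cast; rfl,
    ← ofReal_cpow (by positivity), ← Real.rpow_mul hx.le, ← ofReal_mul, ← Real.rpow_add hx,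
    show d - 1 + d * (1 / d - 1) = 0 by field_simp; ring, Real.rpow_zero, ofReal_one]

lemma integrableOn_cexp_neg_mul_rpow {c : ℂ} {d : ℝ} (hc : 0 < c.re) (hd : 0 < d) :
    IntegrableOn (fun x : ℝ => cexp (-(c * ((x ^ d : ℝ) : ℂ)))) (Ioi 0) := by
  refine Integrable.mono' (integrableOn_rpow_mul_exp_neg_mul_rpow neg_one_lt_zero hd hc)
    (by fun_prop : Measurable _).aestronglyMeasurable (ae_of_all _ fun x => ?_)
  simp [norm_exp]

theorem integral_cexp_neg_mul_rpow {c : ℂ} {d : ℝ} (hc : 0 < c.re) (hd : 0 < d) :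
    ∫ x in Ioi (0 : ℝ), cexp (-(c * ((x ^ d : ℝ) : ℂ))) =
      Gamma (1 / d) * c ^ (-(1 / d : ℂ)) / d := by
  have hsub := integral_comp_rpow_Ioi_of_pos hd
    (g := fun y : ℝ => (y : ℂ) ^ (1 / (d : ℂ) - 1) * cexp (-(c * y)))
  rw [integral_cpow_mul_cexp_neg_mul_Ioi (by simpa using hd) hc] at hsub
  rw [eq_div_iff (ofReal_ne_zero.2 hd.ne'), ← hsub, ← integral_mul_const]
  refine setIntegral_congr_fun measurableSet_Ioi fun x (hx : 0 < x) => ?_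
  rw [real_smul, ofReal_mul]
  linear_combination -(cexp (-(c * ((x ^ d : ℝ) : ℂ))) * d) *
    ofReal_rpow_sub_one_mul_ofReal_rpow_cpow hd.ne' hx

lemma mul_ofReal_cpow (x : ℂ) {r : ℝ} (hr : 0 < r) (w : ℂ) :
    (x * r) ^ w = x ^ w * (r : ℂ) ^ w := by
  rcases eq_or_ne x 0 with rfl | hx
  · rcases eq_or_ne w 0 with rfl | hw <;> simp [*]
  have hr' : (r : ℂ) ≠ 0 := ofReal_ne_zero.2 hr.ne'
  rw [cpow_def_of_ne_zero (mul_ne_zero hx hr'), cpow_def_of_ne_zero hx, cpow_def_of_ne_zero hr',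
    log_mul_ofReal r hr x hx, ← ofReal_log hr.le, ← exp_add]
  ring_nf

lemma integrable_prod_cpow_mul_cexp_mul_cexp_rpow {a b s : ℂ} {d : ℝ} (hd : 0 < d)
    (ha : 0 < a.re) (hb : 0 < b.re) (hs : 1 / d < s.re) :
    Integrable (fun p : ℝ × ℝ => (p.2 : ℂ) ^ (s - 1) * cexp (-(b * p.2)) *
        cexp (-(a * p.2 * ((p.1 ^ d : ℝ) : ℂ))))
      ((volume.restrict (Ioi 0)).prod (volume.restrict (Ioi 0))) := by
  rw [integrable_prod_iff' (by fun_prop : Measurable _).aestronglyMeasurable]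
  refine ⟨(ae_restrict_iff' measurableSet_Ioi).2 (ae_of_all _ fun t (ht : 0 < t) => ?_), ?_⟩
  · exact (integrableOn_cexp_neg_mul_rpow (c := a * t) (by simpa using mul_pos ha ht)
      hd).const_mul ((t : ℂ) ^ (s - 1) * cexp (-(b * t)))
  refine IntegrableOn.congr_fun (f := fun t : ℝ => Real.Gamma (1 / d + 1) * a.re ^ (-1 / d) *
      (t ^ (s.re - 1 / d - 1) * rexp (-(b.re * t))))
    ((integrableOn_rpow_mul_exp_neg_mul (by linarith) hb).const_mul _)
    (fun t (ht : 0 < t) => ?_) measurableSet_Ioi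
  have hnorm : ∀ x : ℝ,
      ‖(t : ℂ) ^ (s - 1) * cexp (-(b * t)) * cexp (-(a * t * ((x ^ d : ℝ) : ℂ)))‖ =
        t ^ (s.re - 1) * rexp (-(b.re * t)) * rexp (-(a.re * t) * x ^ d) := fun x => by
    rw [norm_mul, norm_cpow_mul_cexp_neg_mul s b ht, norm_exp]
    simp
  simp only [hnorm]
  rw [integral_const_mul, integral_exp_neg_mul_rpow hd (mul_pos ha ht),
    Real.mul_rpow ha.le ht.le, show s.re - 1 / d - 1 = s.re - 1 + -1 / d by ring, Real.rpow_add ht]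
  ring

lemma integral_cpow_mul_cexp_mul_cexp_rpow {a b s : ℂ} {d : ℝ} (hd : 0 < d)
    (ha : 0 < a.re) {t : ℝ} (ht : 0 < t) :
    ∫ x in Ioi (0 : ℝ),
        (t : ℂ) ^ (s - 1) * cexp (-(b * t)) * cexp (-(a * t * ((x ^ d : ℝ) : ℂ))) =
      Gamma (1 / d) * a ^ (-(1 / d : ℂ)) / d * ((t : ℂ) ^ (s - 1 / d - 1) * cexp (-(b * t))) := by
  rw [integral_const_mul,
    integral_cexp_neg_mul_rpow (c := a * t) (by simpa using mul_pos ha ht) hd,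
    mul_ofReal_cpow a ht, sub_right_comm, sub_eq_add_neg (s - 1),
    cpow_add _ _ (ofReal_ne_zero.2 ht.ne')]
  ring

lemma cpow_neg_eq_inv_Gamma_mul_integral {s w : ℂ} (hs : 0 < s.re) (hw : 0 < w.re) :
    w ^ (-s) = (Gamma s)⁻¹ * ∫ t in Ioi (0 : ℝ), (t : ℂ) ^ (s - 1) * cexp (-(w * t)) := by
  rw [integral_cpow_mul_cexp_neg_mul_Ioi hs hw,
    inv_mul_cancel_left₀ (Gamma_ne_zero_of_re_pos hs)]

/-- `∫₀^∞ (b + a·x^d)^{−s} dx = (1/(d·a^{1/d}·b^{s−1/d})) · Γ(s−1/d)·Γ(1/d)/Γ(s)`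
for real `d > 0` and `a, b, s ∈ ℂ` with `Re a > 0`, `Re b > 0`, `Re s > 1/d`. -/
theorem stmt1 (d : ℝ) (hd : 0 < d) (a b s : ℂ) (ha : 0 < a.re) (hb : 0 < b.re)
    (hs : 1 / d < s.re) :
    ∫ x in Set.Ioi (0 : ℝ), (b + a * ((x ^ d : ℝ) : ℂ)) ^ (-s) =
      (1 / ((d : ℂ) * a ^ (1 / (d : ℂ)) * b ^ (s - 1 / (d : ℂ)))) *
        (Complex.Gamma (s - 1 / (d : ℂ)) * Complex.Gamma (1 / (d : ℂ)) / Complex.Gamma s) := by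
  have hs₀ : 0 < s.re := (one_div_pos.2 hd).trans hs
  have hs₁ : 0 < (s - 1 / d).re := by simpa using hs
  have hGamma : ∀ x ∈ Ioi (0 : ℝ), (b + a * ((x ^ d : ℝ) : ℂ)) ^ (-s) = (Gamma s)⁻¹ *
      ∫ t in Ioi (0 : ℝ),
        (t : ℂ) ^ (s - 1) * cexp (-(b * t)) * cexp (-(a * t * ((x ^ d : ℝ) : ℂ))) := by
    intro x (hx : 0 < x)
    have hre : 0 < (b + a * ((x ^ d : ℝ) : ℂ)).re := by
      simpa using add_pos hb (mul_pos ha (Real.rpow_pos_of_pos hx d))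
    rw [cpow_neg_eq_inv_Gamma_mul_integral hs₀ hre]
    congr 1
    refine integral_congr_ae (ae_of_all _ fun t => ?_)
    simp only [mul_assoc, ← exp_add]
    ring_nf
  rw [setIntegral_congr_fun measurableSet_Ioi hGamma, integral_const_mul,
    integral_integral_swap (integrable_prod_cpow_mul_cexp_mul_cexp_rpow hd ha hb hs),
    setIntegral_congr_fun measurableSet_Ioi fun t ht =>
      integral_cpow_mul_cexp_mul_cexp_rpow hd ha ht,
    integral_const_mul, integral_cpow_mul_cexp_neg_mul_Ioi hs₁ hb, cpow_neg, cpow_neg]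
  ring
end

section
/- Let d ∈ ℕ, s ∈ ℂ, and a, b ∈ ℂ with Re a > 0 and Re b > 0; set δ = (Re b / Re a)^{1/d} and define f : (−δ, ∞) → ℂ by f(x) = (b + a·x^d)^{−s}. Then for every k ∈ ℕ₀: if d divides k then f^{(k)}(0) = k! · binom(−s, k/d) · a^{k/d} · b^{−s−k/d}, and if d does not divide k then f^{(k)}(0) = 0. -/
/-!
The function `w ↦ (b + a w)^{-s}` is holomorphic near `0` (as `Re b > 0`), and differentiating
`n` times gives `(-s)(-s-1)⋯(-s-n+1) aⁿ (b + a w)^{-s-n}`, so its Taylor coefficients at `0` are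
`binom(-s, n) aⁿ b^{-s-n}`. Substituting `w = z^d` moves the `n`-th coefficient to degree `dn`
and leaves zeros elsewhere. Since `0` is interior to `(-δ, ∞)`, the real derivatives of `f` at `0`
are the complex derivatives of `z ↦ (b + a z^d)^{-s}` there, i.e. `k!` times its coefficients.
-/

open Finset

/-- Generalized binomial coefficient `binom(z,ℓ) = z(z−1)⋯(z−ℓ+1)/ℓ!`. -/
noncomputable def cbinom (z : ℂ) (l : ℕ) : ℂ :=
  (∏ i ∈ Finset.range l, (z - (i : ℂ))) / (Nat.factorial l : ℂ)

open FormalMultilinearSeries Filter Topology Complex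

section CompPow

variable {𝕜 : Type*} [NontriviallyNormedField 𝕜] {d : ℕ}

def spreadCoeff (d : ℕ) (c : ℕ → 𝕜) (m : ℕ) : 𝕜 :=
  if d ∣ m then c (m / d) else 0

theorem spreadCoeff_mul_left (hd : 0 < d) (c : ℕ → 𝕜) (n : ℕ) :
    spreadCoeff d c (d * n) = c n := by
  simp [spreadCoeff, Nat.mul_div_cancel_left n hd]

theorem spreadCoeff_of_notMem_range (c : ℕ → 𝕜) {m : ℕ} (hm : m ∉ Set.range (d * ·)) :
    spreadCoeff d c m = 0 :=
  if_neg fun ⟨n, hn⟩ ↦ hm ⟨n, hn.symm⟩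

theorem le_radius_ofScalars_spreadCoeff (hd : 0 < d) (c : ℕ → 𝕜) :
    min (ofScalars 𝕜 c).radius 1 ≤ (ofScalars 𝕜 (spreadCoeff d c)).radius := by
  refine ENNReal.le_of_forall_nnreal_lt fun t ht ↦ le_radius_of_summable _ ?_
  have ht1 : (t : ℝ) ≤ 1 := by exact_mod_cast (ht.trans_le (min_le_right _ _)).le
  have hsum := summable_norm_mul_pow _ (ht.trans_le (min_le_left _ _))
  simp only [ofScalars_norm] at hsum ⊢
  refine ((mul_right_injective₀ hd.ne').summable_iff fun m hm ↦ ?_).mp ?_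
  · simp [spreadCoeff_of_notMem_range c hm]
  simp only [Function.comp_def, spreadCoeff_mul_left hd]
  refine hsum.of_nonneg_of_le (fun n ↦ by positivity) fun n ↦ ?_
  exact mul_le_mul_of_nonneg_left
    (pow_le_pow_of_le_one t.coe_nonneg ht1 (Nat.le_mul_of_pos_left n hd)) (norm_nonneg _)

theorem HasFPowerSeriesAt.comp_pow {g : 𝕜 → 𝕜} {c : ℕ → 𝕜}
    (hg : HasFPowerSeriesAt g (ofScalars 𝕜 c) 0) (hd : 0 < d) :
    HasFPowerSeriesAt (fun z ↦ g (z ^ d)) (ofScalars 𝕜 (spreadCoeff d c)) 0 := by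
  obtain ⟨r, hr⟩ := hg
  refine ⟨min r 1, ⟨(min_le_min_right 1 hr.r_le).trans (le_radius_ofScalars_spreadCoeff hd c),
    lt_min hr.r_pos one_pos, fun {y} hy ↦ ?_⟩⟩
  rw [mem_eball_zero_iff, lt_min_iff] at hy
  have hyd : y ^ d ∈ Metric.eball 0 r := by
    rw [mem_eball_zero_iff, enorm_pow]
    exact (pow_le_of_le_one zero_le hy.2.le hd.ne').trans_lt hy.1
  have := hr.hasSum hyd
  simp only [ofScalars_apply_eq, zero_add, ← pow_mul] at this ⊢
  refine ((mul_right_injective₀ hd.ne').hasSum_iff fun m hm ↦ ?_).mp ?_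
  · simp [spreadCoeff_of_notMem_range c hm]
  simpa [Function.comp_def, spreadCoeff_mul_left hd] using this

end CompPow

theorem HasFPowerSeriesAt.iteratedDeriv_eq_factorial_mul {𝕜 : Type*} [NontriviallyNormedField 𝕜]
    [CompleteSpace 𝕜] [CharZero 𝕜] {f : 𝕜 → 𝕜} {c : ℕ → 𝕜} {x : 𝕜}
    (hf : HasFPowerSeriesAt f (ofScalars 𝕜 c) x) (n : ℕ) :
    iteratedDeriv n f x = n.factorial * c n := by
  have := congrFun (ofScalars_series_injective _ _
    (hf.eq_formalMultilinearSeries hf.analyticAt.hasFPowerSeriesAt)) n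
  rw [this, mul_div_cancel₀ _ (by exact_mod_cast n.factorial_ne_zero)]

theorem iteratedDeriv_comp_ofReal {G : ℂ → ℂ} {U : Set ℂ} (hU : IsOpen U)
    (hG : AnalyticOnNhd ℂ G U) (n : ℕ) {x : ℝ} (hx : (x : ℂ) ∈ U) :
    iteratedDeriv n (fun t : ℝ ↦ G t) x = iteratedDeriv n G x := by
  induction n generalizing x with
  | zero => simp
  | succ n ih =>
    have hnhds : ∀ᶠ t : ℝ in 𝓝 x, (t : ℂ) ∈ U :=
      continuous_ofReal.continuousAt.preimage_mem_nhds (hU.mem_nhds hx)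
    have hdiff : DifferentiableAt ℂ (iteratedDeriv n G) x := by
      rw [iteratedDeriv_eq_iterate]
      exact (hG.iterated_deriv n x hx).differentiableAt
    rw [iteratedDeriv_succ, iteratedDeriv_succ,
      Filter.EventuallyEq.deriv_eq (hnhds.mono fun t ht ↦ ih ht)]
    exact hdiff.hasDerivAt.comp_ofReal.deriv

theorem iteratedDeriv_cpow_affine (z a b : ℂ) (n : ℕ) {w : ℂ} (hw : b + a * w ∈ slitPlane) :
    iteratedDeriv n (fun w ↦ (b + a * w) ^ z) w =
      (∏ i ∈ range n, (z - i)) * a ^ n * (b + a * w) ^ (z - n) := by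
  induction n generalizing w with
  | zero => simp
  | succ n ih =>
    have hnhds : ∀ᶠ v in 𝓝 w, b + a * v ∈ slitPlane :=
      (continuous_const.add (continuous_const.mul continuous_id)).continuousAt.preimage_mem_nhds
        (isOpen_slitPlane.mem_nhds hw)
    have hderiv : HasDerivAt (fun v ↦ b + a * v) a w := by
      simpa using ((hasDerivAt_id w).const_mul a).const_add b
    rw [iteratedDeriv_succ, Filter.EventuallyEq.deriv_eq (hnhds.mono fun v hv ↦ ih hv),
      ((hderiv.cpow_const hw).const_mul _).deriv, prod_range_succ]
    push_cast
    ring_nf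

theorem hasFPowerSeriesAt_cpow_affine (z a : ℂ) {b : ℂ} (hb : b ∈ slitPlane) :
    HasFPowerSeriesAt (fun w ↦ (b + a * w) ^ z)
      (ofScalars ℂ fun n ↦ cbinom z n * a ^ n * b ^ (z - n)) 0 := by
  have hanalytic : AnalyticAt ℂ (fun w ↦ (b + a * w) ^ z) 0 :=
    (analyticAt_const.add (analyticAt_const.mul analyticAt_id)).cpow analyticAt_const
      (by simpa using hb)
  have hcoeff : (fun n : ℕ ↦ iteratedDeriv n (fun w ↦ (b + a * w) ^ z) 0 / n.factorial) =
      fun n ↦ cbinom z n * a ^ n * b ^ (z - n) := by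
    funext n
    rw [iteratedDeriv_cpow_affine z a b n (by simpa using hb), cbinom, mul_zero, add_zero]
    ring
  exact hcoeff ▸ hanalytic.hasFPowerSeriesAt

/-- For `f(x) = (b + a·x^d)^{−s}` on `(−δ, ∞)` with `δ = (Re b/Re a)^{1/d}`:
`f^{(k)}(0) = k!·binom(−s,k/d)·a^{k/d}·b^{−s−k/d}` if `d ∣ k`, and `f^{(k)}(0) = 0`
otherwise. -/
theorem stmt4 (d : ℕ) (hd : 0 < d) (s a b : ℂ) (ha : 0 < a.re) (hb : 0 < b.re) (k : ℕ) :
    (d ∣ k →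
      iteratedDerivWithin k (fun x : ℝ => (b + a * (x : ℂ) ^ d) ^ (-s))
          (Set.Ioi (-((b.re / a.re) ^ (1 / (d : ℝ))))) 0 =
        (Nat.factorial k : ℂ) * cbinom (-s) (k / d) * a ^ (k / d) *
          b ^ (-s - ((k / d : ℕ) : ℂ))) ∧
    (¬ d ∣ k →
      iteratedDerivWithin k (fun x : ℝ => (b + a * (x : ℂ) ^ d) ^ (-s))
          (Set.Ioi (-((b.re / a.re) ^ (1 / (d : ℝ))))) 0 = 0) := by
  set U : Set ℂ := {z | b + a * z ^ d ∈ slitPlane}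
  have hU : IsOpen U := isOpen_slitPlane.preimage (by fun_prop)
  have hb' : b ∈ slitPlane := mem_slitPlane_iff.mpr (Or.inl hb)
  have h0U : ((0 : ℝ) : ℂ) ∈ U := by simpa [U, hd.ne'] using hb'
  have hanalytic : AnalyticOnNhd ℂ (fun z ↦ (b + a * z ^ d) ^ (-s)) U := fun z hz ↦
    (analyticAt_const.add (analyticAt_const.mul (analyticAt_id.pow d))).cpow analyticAt_const hz
  have hδ : (0 : ℝ) < (b.re / a.re) ^ (1 / (d : ℝ)) := Real.rpow_pos_of_pos (div_pos hb ha) _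
  have hseries := (hasFPowerSeriesAt_cpow_affine (-s) a hb').comp_pow hd
  rw [iteratedDerivWithin_of_isOpen isOpen_Ioi (by simpa using hδ),
    iteratedDeriv_comp_ofReal hU hanalytic k h0U, Complex.ofReal_zero,
    hseries.iteratedDeriv_eq_factorial_mul, spreadCoeff]
  constructor
  · intro hdvd
    rw [if_pos hdvd]
    ring
  · intro hndvd
    rw [if_neg hndvd, mul_zero]
end

section
/- Let n ∈ ℕ and let c, e : ℕ₀^n → ℂ be finitely supported functions such that ∑_{k ∈ ℕ₀^n} c(k) · ∏_{i=1}^n a_i^{k_i} = ∑_{α ∈ ℕ₀^n} e(α) · ∏_{i=1}^n (1 + a_i)^{α_i} for all a = (a₁,…,a_n) ∈ ℝ^n. Then ∑_{k ∈ ℕ₀^n} c(k) · ∏_{i=1}^n B_{k_i} = ∑_{α ∈ ℕ₀^n} e(α) · ∏_{i=1}^n B̃_{α_i}. -/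
/-!
Both sides are the value of one linear functional, the umbral substitution `X_i ^ j ↦ B_j`, at
one polynomial written in two bases. The hypothesis pins that polynomial down, since a complex
polynomial vanishing on `ℝ^n` is zero. The functional is multiplicative across distinct
variables, so on `∏ (1 + X_i) ^ α_i` it gives `∏ ∑_j C(α_i, j) B_j = ∏ B̃_{α_i}`.
-/

open Finset

noncomputable def Btil (k : ℕ) : ℚ := (-1) ^ k * bernoulli k

theorem sum_range_succ_choose_mul_bernoulli (m : ℕ) :
    ∑ j ∈ range (m + 1), (m.choose j : ℚ) * bernoulli j = Btil m := by
  rw [sum_range_succ, sum_bernoulli, Nat.choose_self, Btil, ← bernoulli'_eq_bernoulli]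
  rcases eq_or_ne m 1 with rfl | hm
  · norm_num
  · rw [if_neg hm, bernoulli_eq_bernoulli'_of_ne_one hm]
    ring

namespace MvPolynomial

theorem eq_of_eval_ofReal_eq {σ : Type*} {p q : MvPolynomial σ ℂ}
    (h : ∀ a : σ → ℝ, eval (fun i => (a i : ℂ)) p = eval (fun i => (a i : ℂ)) q) : p = q := by
  refine funext_set (fun _ => Set.range Complex.ofReal)
    (fun _ => Set.infinite_range_of_injective Complex.ofReal_injective) fun x hx => ?_
  choose a ha using fun i => hx i (Set.mem_univ i)
  obtain rfl : (fun i => (a i : ℂ)) = x := _root_.funext ha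
  exact h a

section Umbral

variable {σ R : Type*} [Fintype σ] [CommSemiring R]

theorem prod_univ_X_pow_eq_monomial (g : σ → ℕ) :
    ∏ i, (X i : MvPolynomial σ R) ^ g i = monomial (Finsupp.equivFunOnFinite.symm g) 1 := by
  classical
  rw [monomial_eq, C_1, one_mul, Finsupp.prod_fintype _ _ fun _ => pow_zero _]
  rfl

noncomputable def umbralEval (w : ℕ → R) : MvPolynomial σ R →ₗ[R] R :=
  (basisMonomials σ R).constr R fun k => ∏ i, w (k i)

theorem umbralEval_prod_X_pow (w : ℕ → R) (g : σ → ℕ) :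
    umbralEval w (∏ i, (X i : MvPolynomial σ R) ^ g i) = ∏ i, w (g i) := by
  rw [prod_univ_X_pow_eq_monomial]
  exact (basisMonomials σ R).constr_basis R _ _

theorem umbralEval_prod_one_add_X_pow (w : ℕ → R) (m : σ → ℕ) :
    umbralEval w (∏ i, (1 + X i : MvPolynomial σ R) ^ m i) =
      ∏ i, ∑ j ∈ range (m i + 1), (m i).choose j * w j := by
  classical
  have expand (i : σ) : (1 + X i : MvPolynomial σ R) ^ m i =
      ∑ j ∈ range (m i + 1), ((m i).choose j : R) • X i ^ j := by
    rw [add_comm, add_pow]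
    refine sum_congr rfl fun j _ => ?_
    rw [one_pow, mul_one, mul_comm, smul_eq_C_mul, map_natCast]
  simp_rw [expand, prod_univ_sum, prod_smul, map_sum, map_smul, umbralEval_prod_X_pow, smul_eq_mul,
    ← prod_mul_distrib]

end Umbral

end MvPolynomial

open MvPolynomial

/-- If two finitely supported coefficient families `c`, `e` on `ℕ₀^n` represent the
same polynomial function — `∑_k c(k) ∏ a_i^{k_i} = ∑_α e(α) ∏ (1+a_i)^{α_i}` for all
real `a` — then substituting Bernoulli numbers in the monomial basis agrees with
substituting the modified Bernoulli numbers `B̃` in the shifted basis: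
`∑_k c(k) ∏ B_{k_i} = ∑_α e(α) ∏ B̃_{α_i}`. -/
theorem stmt17 (n : ℕ) (c e : ((Fin n → ℕ) →₀ ℂ))
    (h : ∀ a : Fin n → ℝ,
      (c.sum fun k v => v * ∏ i, ((a i : ℂ)) ^ (k i)) =
        (e.sum fun α v => v * ∏ i, ((1 : ℂ) + (a i : ℂ)) ^ (α i))) :
    (c.sum fun k v => v * ∏ i, ((bernoulli (k i) : ℂ))) =
      (e.sum fun α v => v * ∏ i, ((Btil (α i) : ℂ))) := by
  have hpoly : (c.sum fun k v => v • ∏ i, (X i : MvPolynomial (Fin n) ℂ) ^ k i) =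
      e.sum fun α v => v • ∏ i, (1 + X i : MvPolynomial (Fin n) ℂ) ^ α i :=
    eq_of_eval_ofReal_eq fun a => by simpa [map_finsuppSum] using h a
  have hbernoulli := congrArg (umbralEval fun j => (bernoulli j : ℂ)) hpoly
  simp only [map_finsuppSum, map_smul, umbralEval_prod_X_pow, umbralEval_prod_one_add_X_pow,
    smul_eq_mul] at hbernoulli
  simpa [← sum_range_succ_choose_mul_bernoulli] using hbernoulli
end
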